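/- arXiv:2209.09581 — 2 statements merged into one kernel-verified Lean document; each statement's English description precedes it below -/
import Mathlib

section
/- Let (ω(i))_{i≥0} be a non-negative sequence with ω(i) ≤ c·e^{-ξ i} for all i ≥ 0, where c > 0 and 0 < ξ ≤ 1. Then for every j ≥ 0, ∑_{i=j}^∞ sqrt(ω(i)/(i+1)) ≤ 5·sqrt(c)·e^{-ξ j / 2} / ξ. -/
/-!
Since `ω n / (n + 1) ≤ ω n ≤ c e^{-ξ n}`, the `n`-th term is at most `√c · r ^ n` with
`r = e^{-ξ/2}`, so the tail from `j` is at most `√c · r ^ j / (1 - r)`. The bound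
`e^x ≥ 1 + x` gives `(1 - e^{-x})⁻¹ ≤ 1 + x⁻¹`, which for `x = ξ/2 ≤ 1/2` is at most `3 / ξ`.
-/

open Real

theorem Real.inv_one_sub_exp_neg_le {x : ℝ} (hx : 0 < x) : (1 - exp (-x))⁻¹ ≤ 1 + x⁻¹ := by
  have hexp : (x + 1) * exp (-x) ≤ 1 := by
    calc (x + 1) * exp (-x) ≤ exp x * exp (-x) := by gcongr; exact add_one_le_exp x
      _ = 1 := by rw [← exp_add, add_neg_cancel, exp_zero]
  have hgap : 0 < 1 - exp (-x) := sub_pos.mpr (exp_lt_one_iff.mpr (neg_lt_zero.mpr hx))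
  rw [inv_le_iff_one_le_mul₀ hgap,
    show (1 + x⁻¹) * (1 - exp (-x)) = (x + 1) * (1 - exp (-x)) / x by field_simp, le_div_iff₀ hx]
  linarith

theorem Real.sqrt_mul_exp_neg_mul (c ξ : ℝ) (n : ℕ) :
    √(c * exp (-ξ * n)) = √c * exp (-(ξ / 2)) ^ n := by
  rw [sqrt_mul' c (exp_pos _).le, ← exp_half, ← exp_nat_mul]
  ring_nf

theorem summable_and_tsum_le_of_le_geometric {f : ℕ → ℝ} {C r : ℝ} (hf : ∀ i, 0 ≤ f i)
    (hr0 : 0 ≤ r) (hr1 : r < 1) (hle : ∀ i, f i ≤ C * r ^ i) :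
    Summable f ∧ ∑' i, f i ≤ C / (1 - r) := by
  have hg : Summable fun i ↦ C * r ^ i := (summable_geometric_of_lt_one hr0 hr1).mul_left C
  have hs : Summable f := hg.of_nonneg_of_le hf hle
  refine ⟨hs, (hs.tsum_le_tsum hle hg).trans_eq ?_⟩
  rw [tsum_mul_left, tsum_geometric_of_lt_one hr0 hr1, div_eq_mul_inv]

theorem stmt3_general (ω : ℕ → ℝ) (c ξ : ℝ) (hξ : 0 < ξ) (hξ1 : ξ ≤ 1)
    (hnn : ∀ i, 0 ≤ ω i) (hb : ∀ i : ℕ, ω i ≤ c * Real.exp (-ξ * i)) :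
    ∀ j : ℕ, Summable (fun i : ℕ => Real.sqrt (ω (j + i) / ((j : ℝ) + (i : ℝ) + 1))) ∧
      ∑' i : ℕ, Real.sqrt (ω (j + i) / ((j : ℝ) + (i : ℝ) + 1))
        ≤ 5 * Real.sqrt c * Real.exp (-ξ * j / 2) / ξ := by
  intro j
  set r := exp (-(ξ / 2))
  have hr1 : r < 1 := exp_lt_one_iff.mpr (by linarith)
  have hterm (i : ℕ) : √(ω (j + i) / ((j : ℝ) + i + 1)) ≤ √c * r ^ j * r ^ i := by
    rw [mul_assoc, ← pow_add, ← sqrt_mul_exp_neg_mul]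
    refine sqrt_le_sqrt ((div_le_self (hnn _) ?_).trans (hb _))
    linarith [(j.cast_nonneg : (0 : ℝ) ≤ j), (i.cast_nonneg : (0 : ℝ) ≤ i)]
  obtain ⟨hs, htail⟩ := summable_and_tsum_le_of_le_geometric (fun i ↦ sqrt_nonneg _)
    (exp_pos _).le hr1 hterm
  refine ⟨hs, htail.trans ?_⟩
  have hinv : (1 - r)⁻¹ ≤ 5 / ξ :=
    calc (1 - r)⁻¹ ≤ 1 + (ξ / 2)⁻¹ := inv_one_sub_exp_neg_le (by positivity)
      _ ≤ 5 / ξ := by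
        rw [inv_div, ← sub_nonneg, show 5 / ξ - (1 + 2 / ξ) = (3 - ξ) / ξ by field_simp; ring]
        exact div_nonneg (by linarith) hξ.le
  have hrj : r ^ j = exp (-ξ * j / 2) := by rw [← exp_nat_mul]; ring_nf
  calc √c * r ^ j / (1 - r) = √c * exp (-ξ * j / 2) * (1 - r)⁻¹ := by rw [hrj, div_eq_mul_inv]
    _ ≤ √c * exp (-ξ * j / 2) * (5 / ξ) := by gcongr
    _ = 5 * √c * exp (-ξ * j / 2) / ξ := by ring

theorem stmt3 (ω : ℕ → ℝ) (c ξ : ℝ) (hc : 0 < c) (hξ : 0 < ξ) (hξ1 : ξ ≤ 1)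
    (hnn : ∀ i, 0 ≤ ω i) (hb : ∀ i : ℕ, ω i ≤ c * Real.exp (-ξ * i)) :
    ∀ j : ℕ, Summable (fun i : ℕ => Real.sqrt (ω (j + i) / ((j : ℝ) + (i : ℝ) + 1))) ∧
      ∑' i : ℕ, Real.sqrt (ω (j + i) / ((j : ℝ) + (i : ℝ) + 1))
        ≤ 5 * Real.sqrt c * Real.exp (-ξ * j / 2) / ξ :=
  stmt3_general ω c ξ hξ hξ1 hnn hb
end

section
/- Under Assumption A1, for all h ≥ 0 and k > 0, the absolute bias of the time-average satisfies |E[(1/k)∑_{i=h}^{h+k-1} f(Xᵢ)] − μ| ≤ ν̄(⌊h/2⌋)/sqrt(k), where ν̄(j) := ∑_{i=j}^∞ sqrt(ν(i)/(i+1)) and μ := lim_h E[f(X_h)]. -/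
/-!
Because the innovations `U` are i.i.d., shifting their indices does not change the law of the
driving sequence, so `E f(X_{i,m}) = E f(X_{i+m})`. Hence `|E f(X_{i+m}) - E f(X_i)|` is bounded
by the `L²`-distance `√ν(i)` of A1, and letting `m → ∞` bounds the bias at time `i` by `√ν(i)`.
Averaging over a window of length `k` and applying Cauchy–Schwarz bounds the bias of the average
by `√(∑ ν(i)) / √k`, and the tail-sum inequality `∑_{i ≥ 2j} ν(i) ≤ ν̄(j)²` finishes the proof.
-/

open MeasureTheory ProbabilityTheory

/-- Iterated application of the driving map: `iterG g i x u = Gᵢ(x; u₀, …, u_{i-1})`. -/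
noncomputable def iterG {F F' : Type*} (g : F → F' → F) : ℕ → F → (ℕ → F') → F
  | 0, x, _ => x
  | i + 1, x, u => g (iterG g i x u) (u i)

open Finset Filter Topology

lemma measurable_iterG {F F' : Type*} [MeasurableSpace F] [MeasurableSpace F'] {g : F → F' → F}
    (hg : Measurable (Function.uncurry g)) (n : ℕ) (x : F) :
    Measurable (iterG g n x) := by
  induction n with
  | zero => exact measurable_const
  | succ n ih => exact hg.comp (ih.prodMk (measurable_pi_apply n))

namespace ProbabilityTheory

variable {Ω ι κ E : Type*} [MeasurableSpace Ω] [MeasurableSpace E] {P : Measure Ω}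
  {U : ι → Ω → E}

lemma iIndepFun.map_comp_eq_infinitePi (hU : ∀ i, Measurable (U i)) (hindep : iIndepFun U P)
    {L : Measure E} [IsProbabilityMeasure L] (hident : ∀ i, P.map (U i) = L)
    {σ : κ → ι} (hσ : σ.Injective) :
    P.map (fun ω j => U (σ j) ω) = Measure.infinitePi (fun _ : κ => L) := by
  rw [(hindep.precomp hσ).map_fun_eq_infinitePi_map (fun j => hU (σ j))]
  simp only [hident]

lemma iIndepFun.integral_comp_eq_of_injective [IsProbabilityMeasure P]
    (hU : ∀ i, Measurable (U i)) (hindep : iIndepFun U P) {i₀ : ι}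
    (hident : ∀ i, P.map (U i) = P.map (U i₀)) {σ τ : κ → ι} (hσ : σ.Injective)
    (hτ : τ.Injective) {φ : (κ → E) → ℝ} (hφ : Measurable φ) :
    ∫ ω, φ (fun j => U (σ j) ω) ∂P = ∫ ω, φ (fun j => U (τ j) ω) ∂P := by
  have : IsProbabilityMeasure (P.map (U i₀)) :=
    Measure.isProbabilityMeasure_map (hU i₀).aemeasurable
  have hmeas : ∀ ρ : κ → ι, Measurable (fun ω j => U (ρ j) ω) :=
    fun ρ => measurable_pi_lambda _ fun j => hU (ρ j)
  rw [← integral_map (hmeas σ).aemeasurable hφ.aestronglyMeasurable,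
    ← integral_map (hmeas τ).aemeasurable hφ.aestronglyMeasurable,
    hindep.map_comp_eq_infinitePi hU hident hσ, hindep.map_comp_eq_infinitePi hU hident hτ]

lemma integral_iterG_shift_eq [IsProbabilityMeasure P] {F : Type*} [MeasurableSpace F]
    {g : F → E → F} (hg : Measurable (Function.uncurry g)) {U : ℤ → Ω → E}
    (hU : ∀ i, Measurable (U i)) (hindep : iIndepFun U P)
    (hident : ∀ i, P.map (U i) = P.map (U 0)) (x : F) {φ : F → ℝ} (hφ : Measurable φ)
    (n m m' : ℕ) :
    ∫ ω, φ (iterG g n x fun j => U ((j : ℤ) - m) ω) ∂P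
      = ∫ ω, φ (iterG g n x fun j => U ((j : ℤ) - m') ω) ∂P :=
  have hinj : ∀ m : ℕ, (fun j : ℕ => (j : ℤ) - m).Injective :=
    fun m _ _ h => by simpa using h
  hindep.integral_comp_eq_of_injective hU hident (hinj m) (hinj m')
    (hφ.comp (measurable_iterG hg n x))

end ProbabilityTheory

lemma abs_integral_le_sqrt_integral_sq {Ω : Type*} [MeasurableSpace Ω] {P : Measure Ω}
    [IsProbabilityMeasure P] {q : Ω → ℝ} (hq : MemLp q 2 P) :
    |∫ ω, q ω ∂P| ≤ √(∫ ω, q ω ^ 2 ∂P) := by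
  rw [← Real.sqrt_sq_eq_abs]
  apply Real.sqrt_le_sqrt
  have := variance_nonneg q P
  rw [variance_eq_sub hq] at this
  simpa using this

lemma abs_sub_le_of_tendsto {a : ℕ → ℝ} {μ c : ℝ} (ha : Tendsto a atTop (𝓝 μ)) {i : ℕ}
    (h : ∀ m, |a (i + m) - a i| ≤ c) : |a i - μ| ≤ c := by
  rw [abs_sub_comm]
  refine le_of_tendsto (((ha.comp (tendsto_add_atTop_nat i)).sub_const (a i)).abs)
    (Eventually.of_forall fun m => ?_)
  simpa [add_comm] using h m

lemma abs_average_sub_le {ι : Type*} {s : Finset ι} (hs : s.Nonempty) {a c : ι → ℝ} {μ : ℝ}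
    (hc : ∀ i, 0 ≤ c i) (h : ∀ i ∈ s, |a i - μ| ≤ √(c i)) :
    |(1 / (#s : ℝ)) * ∑ i ∈ s, a i - μ| ≤ √(∑ i ∈ s, c i) / √(#s : ℝ) := by
  have hk : (0 : ℝ) < #s := by exact_mod_cast hs.card_pos
  have hCS : ∑ i ∈ s, √(c i) ≤ √(#s : ℝ) * √(∑ i ∈ s, c i) := by
    simpa using Real.sum_sqrt_mul_sqrt_le s (f := fun _ => 1) (fun _ => zero_le_one) hc
  calc |(1 / (#s : ℝ)) * ∑ i ∈ s, a i - μ| = (1 / (#s : ℝ)) * |∑ i ∈ s, (a i - μ)| := by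
        rw [sum_sub_distrib, sum_const, nsmul_eq_mul, ← abs_of_pos (one_div_pos.mpr hk),
          ← abs_mul, abs_of_pos (one_div_pos.mpr hk)]
        field_simp
    _ ≤ (1 / (#s : ℝ)) * (√(#s : ℝ) * √(∑ i ∈ s, c i)) := by
        gcongr
        exact (abs_sum_le_sum_abs _ _).trans ((sum_le_sum h).trans hCS)
    _ = √(∑ i ∈ s, c i) / √(#s : ℝ) := by
        field_simp
        rw [Real.sq_sqrt hk.le]

lemma sum_Ico_mul_sq_le_sq_sum_Ico {b : ℕ → ℝ} (hb : Antitone b) (hb0 : ∀ i, 0 ≤ b i)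
    (j N : ℕ) :
    ∑ n ∈ Ico (2 * j) N, ((n : ℝ) + 1) * b n ^ 2 ≤ (∑ i ∈ Ico j N, b i) ^ 2 := by
  induction N with
  | zero => simp
  | succ N ih =>
    rcases Nat.lt_or_ge N (2 * j) with hN | hN
    · rw [Ico_eq_empty (by omega), sum_empty]
      positivity
    · rw [sum_Ico_succ_top hN, sum_Ico_succ_top (by omega)]
      have hS : ((N : ℝ) - j) * b N ≤ ∑ i ∈ Ico j N, b i := by
        calc ((N : ℝ) - j) * b N = ∑ i ∈ Ico j N, b N := by
              rw [sum_const, Nat.card_Ico, nsmul_eq_mul, Nat.cast_sub (by omega)]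
          _ ≤ ∑ i ∈ Ico j N, b i := sum_le_sum fun i hi => hb (mem_Ico.mp hi).2.le
      have hN' : (2 * j : ℝ) ≤ N := by exact_mod_cast hN
      -- the new square gains `2 S b_N + b_N² ≥ (2 (N - j) + 1) b_N² ≥ (N + 1) b_N²`
      nlinarith [hb0 N]

lemma sum_Ico_le_sq_sum_sqrt_div {ν : ℕ → ℝ} (hν : Antitone ν) (hν0 : ∀ i, 0 ≤ ν i)
    (j N : ℕ) :
    ∑ n ∈ Ico (2 * j) N, ν n ≤ (∑ i ∈ Ico j N, √(ν i / ((i : ℝ) + 1))) ^ 2 := by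
  have hb : Antitone fun i : ℕ => √(ν i / ((i : ℝ) + 1)) := fun i n hin =>
    Real.sqrt_le_sqrt (div_le_div₀ (hν0 i) (hν hin) (by positivity) (by gcongr))
  convert sum_Ico_mul_sq_le_sq_sum_Ico hb (fun _ => Real.sqrt_nonneg _) j N using 2 with n
  rw [Real.sq_sqrt (div_nonneg (hν0 n) (by positivity)), mul_div_cancel₀ _ (by positivity)]

lemma sum_Ico_le_tsum_nat_add {b : ℕ → ℝ} (hb : Summable b) (hb0 : ∀ i, 0 ≤ b i) (j N : ℕ) :
    ∑ i ∈ Ico j N, b i ≤ ∑' i, b (j + i) := by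
  rw [sum_Ico_eq_sum_range]
  have hb' : Summable fun i => b (j + i) := by
    simpa only [add_comm] using (summable_nat_add_iff j).mpr hb
  exact hb'.sum_le_tsum _ fun i _ => hb0 _

lemma sqrt_sum_Ico_le_tsum_sqrt_div {ν : ℕ → ℝ} (hν : Antitone ν) (hν0 : ∀ i, 0 ≤ ν i)
    (hsum : Summable fun i : ℕ => √(ν i / ((i : ℝ) + 1))) {j h : ℕ} (hjh : 2 * j ≤ h) (N : ℕ) :
    √(∑ i ∈ Ico h N, ν i) ≤ ∑' i, √(ν (j + i) / (((j + i : ℕ) : ℝ) + 1)) := by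
  have hb0 : ∀ i : ℕ, 0 ≤ √(ν i / ((i : ℝ) + 1)) := fun _ => Real.sqrt_nonneg _
  rw [Real.sqrt_le_left (tsum_nonneg fun i => hb0 _)]
  calc ∑ i ∈ Ico h N, ν i ≤ ∑ i ∈ Ico (2 * j) N, ν i :=
        sum_le_sum_of_subset_of_nonneg (Ico_subset_Ico hjh le_rfl) fun i _ _ => hν0 i
    _ ≤ (∑ i ∈ Ico j N, √(ν i / ((i : ℝ) + 1))) ^ 2 := sum_Ico_le_sq_sum_sqrt_div hν hν0 _ _
    _ ≤ _ := by
        gcongr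
        exact sum_Ico_le_tsum_nat_add hsum hb0 _ _

theorem stmt10 {Ω F F' : Type*} [MeasurableSpace Ω] [MeasurableSpace F] [MeasurableSpace F']
    (P : Measure Ω) [IsProbabilityMeasure P]
    (g : F → F' → F) (hg : Measurable (Function.uncurry g))
    (U : ℤ → Ω → F') (hU : ∀ i, Measurable (U i))
    (hindep : iIndepFun U P)
    (hident : ∀ i, Measure.map (U i) P = Measure.map (U 0) P)
    (x0 : F) (f : F → ℝ) (hf : Measurable f)
    -- the coupled shifted chain: `X i m = X_{i,m} = G_{i+m}(X₀; U_{-m}, …, U_{i-1})`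
    (X : ℕ → ℕ → Ω → F)
    (hX : ∀ i m ω, X i m ω = iterG g (i + m) x0 (fun j => U ((j : ℤ) - (m : ℤ)) ω))
    (hL2 : ∀ i m, MemLp (fun ω => f (X i m ω)) 2 P)
    -- Assumption A1
    (ν : ℕ → ℝ) (hpos : ∀ i, 0 < ν i) (hdec : Antitone ν)
    (hsum : Summable (fun i : ℕ => Real.sqrt (ν i / ((i : ℝ) + 1))))
    (hA1 : ∀ i m, ∫ ω, (f (X i m ω) - f (X i 0 ω)) ^ 2 ∂P ≤ ν i)
    -- the tail sums ν̄ and the steady-state limit μ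
    (νbar : ℕ → ℝ)
    (hνbar : ∀ j, νbar j = ∑' i : ℕ, Real.sqrt (ν (j + i) / ((j : ℝ) + (i : ℝ) + 1)))
    (μ : ℝ) (hμ : Filter.Tendsto (fun h : ℕ => ∫ ω, f (X h 0 ω) ∂P) Filter.atTop (nhds μ)) :
    ∀ (h k : ℕ), 0 < k →
      |(∫ ω, (1 / (k : ℝ)) * ∑ i ∈ Finset.Ico h (h + k), f (X i 0 ω) ∂P) - μ|
        ≤ νbar (h / 2) / Real.sqrt k := by
  intro h k hk
  set a : ℕ → ℝ := fun n => ∫ ω, f (X n 0 ω) ∂P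
  have hint : ∀ i m, Integrable (fun ω => f (X i m ω)) P :=
    fun i m => (hL2 i m).integrable one_le_two
  have hstat : ∀ i m, ∫ ω, f (X i m ω) ∂P = a (i + m) := fun i m => by
    simp only [a, hX, add_zero]
    exact integral_iterG_shift_eq hg hU hindep hident x0 hf (i + m) m 0
  have hbias : ∀ i, |a i - μ| ≤ √(ν i) := fun i => abs_sub_le_of_tendsto hμ fun m =>
    calc |a (i + m) - a i| = |∫ ω, (f (X i m ω) - f (X i 0 ω)) ∂P| := by
          rw [integral_sub (hint i m) (hint i 0), hstat, hstat, add_zero]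
      _ ≤ √(∫ ω, (f (X i m ω) - f (X i 0 ω)) ^ 2 ∂P) :=
          abs_integral_le_sqrt_integral_sq ((hL2 i m).sub (hL2 i 0))
      _ ≤ √(ν i) := Real.sqrt_le_sqrt (hA1 i m)
  have havg := abs_average_sub_le (s := Ico h (h + k)) (nonempty_Ico.mpr (by omega))
    (fun i => (hpos i).le) fun i _ => hbias i
  rw [Nat.card_Ico, Nat.add_sub_cancel_left] at havg
  rw [integral_const_mul, integral_finsetSum _ fun i _ => hint i 0]
  calc _ ≤ √(∑ i ∈ Ico h (h + k), ν i) / √(k : ℝ) := havg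
    _ ≤ νbar (h / 2) / √(k : ℝ) := by
        gcongr
        simpa only [hνbar, Nat.cast_add] using sqrt_sum_Ico_le_tsum_sqrt_div hdec
          (fun i => (hpos i).le) hsum (Nat.mul_div_le h 2) (h + k)
end
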